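/- arXiv:2405.08635 — 2 statements merged into one kernel-verified Lean document; each statement's English description precedes it below -/
import Mathlib

section
/- Let M and W be positive integers. For each k ∈ {1, 2, …, W}, let β̃_k : ℝ^M → ℝ^M be a map satisfying β̃_k(x)_j ≠ 0 for every x ∈ ℝ^M and every j ∈ {1, …, M}, and define β_k : ℝ^M × ℝ^M → ℝ^M componentwise by β_k(x, y)_j := β̃_k(x)_j · y_j. Let b^1, …, b^W ∈ ℝ^M and let t ∈ {1, 2, …, W} be an index such that b^t_j ≠ 0 for all j ∈ {1, …, M}. Then a point x* ∈ ℝ^M admits a vector y* ∈ ℝ^M with all components nonzero such that β_k(x*, y*) = b^k for all k ∈ {1, 2, …, W}, if and only if x* satisfies, for all k ∈ {1, 2, …, W} and all j ∈ {1, …, M}, the equation β̃_k(x*)_j / β̃_t(x*)_j = b^k_j / b^t_j. -/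
/-- Lemma 3.1: if every `β_k(x,y)_j = β̃_k(x)_j · y_j` with
`β̃_k(x)_j ≠ 0`, and `b^t` has all components nonzero, then `x*` admits a
componentwise-nonzero `y*` with `β_k(x*, y*) = b^k` for all `k` iff `x*`
solves the ratio system `β̃_k(x*)_j / β̃_t(x*)_j = b^k_j / b^t_j`. -/
theorem exists_pair_iff_ratio_system (M W : ℕ) (hM : 0 < M) (hW : 0 < W)
    (βt : Fin W → (Fin M → ℝ) → (Fin M → ℝ))
    (hβt : ∀ k (x : Fin M → ℝ) (j : Fin M), βt k x j ≠ 0)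
    (β : Fin W → (Fin M → ℝ) → (Fin M → ℝ) → (Fin M → ℝ))
    (hβ : ∀ k (x y : Fin M → ℝ) (j : Fin M), β k x y j = βt k x j * y j)
    (b : Fin W → Fin M → ℝ) (t : Fin W) (hbt : ∀ j : Fin M, b t j ≠ 0)
    (xstar : Fin M → ℝ) :
    (∃ ystar : Fin M → ℝ, (∀ j : Fin M, ystar j ≠ 0) ∧
        ∀ k : Fin W, β k xstar ystar = b k) ↔
      (∀ (k : Fin W) (j : Fin M),
        βt k xstar j / βt t xstar j = b k j / b t j) := by
  constructor
  · rintro ⟨y, hy, hky⟩ k j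
    have hk := congrFun (hky k) j
    have ht := congrFun (hky t) j
    rw [hβ] at hk ht
    rw [← hk, ← ht]
    rw [mul_div_mul_right _ _ (hy j)]
  · intro h
    refine ⟨fun j => b t j / βt t xstar j, fun j => div_ne_zero (hbt j) (hβt t xstar j), ?_⟩
    intro k
    funext j
    rw [hβ]
    have := h k j
    rw [div_eq_div_iff (hβt t xstar j) (hbt j)] at this
    rw [mul_div_assoc', div_eq_iff (hβt t xstar j)]
    linarith [this]
end

section
/- Let M be a positive integer, let S_k, S_t, T_0 be positive real constants, let E_k, E_t be real constants with E_k > E_t, and let u ∈ ℝ^M. Define f : ℝ^M → ℝ^M componentwise by f(x)_j := (S_k / S_t) · exp(−(E_k − E_t)(1/x_j − 1/T_0)), and define g : ℝ^M → ℝ by g(x) := (1/2) Σ_{j=1}^{M} (f(x)_j − u_j)². Let x̄ ∈ ℝ^M have all components strictly positive, and set v := u − f(x̄). If v ≠ 0, then the directional derivative of g at x̄ in the direction v is strictly negative, i.e., Σ_{j=1}^{M} (∂g(x̄)/∂x_j) · v_j < 0; in other words, v is a descent direction for g at x̄. -/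
/-!
Write `g(x) = ½ Σⱼ (φ(xⱼ) − uⱼ)²` with `φ(t) = (S_k/S_t) exp(−(E_k − E_t)(1/t − 1/T₀))`. Since `f`
acts coordinatewise, `∂g/∂xⱼ = (φ(xⱼ) − uⱼ) φ'(xⱼ) = −vⱼ φ'(xⱼ)`, so the directional derivative
along the residual `v` is `−Σⱼ φ'(x̄ⱼ) vⱼ²`, which is negative because
`φ'(t) = φ(t) (E_k − E_t) / t² > 0` and `v ≠ 0`.
-/

open Real

section SeparableLeastSquares

variable {ι : Type*} [Fintype ι] [DecidableEq ι]

theorem fderiv_sum_apply_comp_apply_single {h : ι → ℝ → ℝ} {h' : ι → ℝ} {x : ι → ℝ}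
    (hh : ∀ j, HasDerivAt (h j) (h' j) (x j)) (i : ι) :
    fderiv ℝ (fun y : ι → ℝ => ∑ j, h j (y j)) x (Pi.single i 1) = h' i := by
  have hsum : HasFDerivAt (fun y : ι → ℝ => ∑ j, h j (y j))
      (∑ j, h' j • ContinuousLinearMap.proj (R := ℝ) (φ := fun _ : ι => ℝ) j) x :=
    HasFDerivAt.fun_sum fun j _ => (hh j).comp_hasFDerivAt x (hasFDerivAt_apply j x)
  simp [hsum.fderiv, Pi.single_apply]

theorem fderiv_half_sum_sq_sub_apply_single {φ : ι → ℝ → ℝ} {φ' : ι → ℝ} {x : ι → ℝ}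
    (u : ι → ℝ) (hφ : ∀ j, HasDerivAt (φ j) (φ' j) (x j)) (i : ι) :
    fderiv ℝ (fun y : ι → ℝ => 1 / 2 * ∑ j, (φ j (y j) - u j) ^ 2) x (Pi.single i 1)
      = (φ i (x i) - u i) * φ' i := by
  have hsq : ∀ j, HasDerivAt (fun t => 1 / 2 * (φ j t - u j) ^ 2)
      ((φ j (x j) - u j) * φ' j) (x j) := fun j =>
    ((((hφ j).sub_const (u j)).pow 2).const_mul (1 / 2 : ℝ)).congr_deriv (by ring)
  simp_rw [Finset.mul_sum]
  exact fderiv_sum_apply_comp_apply_single hsq i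

theorem sum_fderiv_half_sum_sq_sub_mul_residual_neg {φ : ι → ℝ → ℝ} {φ' : ι → ℝ}
    {x u : ι → ℝ} (hφ : ∀ j, HasDerivAt (φ j) (φ' j) (x j)) (hφ'_pos : ∀ j, 0 < φ' j)
    (hres : (fun j => u j - φ j (x j)) ≠ 0) :
    ∑ i, fderiv ℝ (fun y : ι → ℝ => 1 / 2 * ∑ j, (φ j (y j) - u j) ^ 2) x (Pi.single i 1)
      * (u i - φ i (x i)) < 0 := by
  obtain ⟨i₀, hi₀⟩ := Function.ne_iff.mp hres
  have hterm : ∀ i, fderiv ℝ (fun y : ι → ℝ => 1 / 2 * ∑ j, (φ j (y j) - u j) ^ 2) x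
      (Pi.single i 1) * (u i - φ i (x i)) = -(φ' i * (u i - φ i (x i)) ^ 2) := fun i => by
    rw [fderiv_half_sum_sq_sub_apply_single u hφ]
    ring
  simp_rw [hterm, Finset.sum_neg_distrib, neg_lt_zero]
  exact Finset.sum_pos' (fun i _ => by have := hφ'_pos i; positivity)
    ⟨i₀, Finset.mem_univ _, mul_pos (hφ'_pos i₀) (sq_pos_of_ne_zero hi₀)⟩

end SeparableLeastSquares

theorem hasDerivAt_mul_exp_neg_mul_inv_sub (A B T0 : ℝ) {t : ℝ} (ht : t ≠ 0) :
    HasDerivAt (fun s => A * exp (-B * (1 / s - 1 / T0)))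
      (A * exp (-B * (1 / t - 1 / T0)) * (B / t ^ 2)) t := by
  have hinv : HasDerivAt (fun s : ℝ => 1 / s - 1 / T0) (-(1 / t ^ 2)) t := by
    simpa [one_div] using (hasDerivAt_inv ht).sub_const (1 / T0)
  exact (((hinv.const_mul (-B)).exp).const_mul A).congr_deriv (by ring)

theorem residual_is_descent_direction_general (M : ℕ)
    (Sk St T0 : ℝ) (hSk : 0 < Sk) (hSt : 0 < St)
    (Ek Et : ℝ) (hE : Ek > Et) (u : Fin M → ℝ)
    (f : (Fin M → ℝ) → (Fin M → ℝ))
    (hf : ∀ (x : Fin M → ℝ) (j : Fin M),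
      f x j = (Sk / St) * Real.exp (-(Ek - Et) * (1 / x j - 1 / T0)))
    (g : (Fin M → ℝ) → ℝ)
    (hg : ∀ x : Fin M → ℝ, g x = (1 / 2) * ∑ j : Fin M, (f x j - u j) ^ 2)
    (xbar : Fin M → ℝ) (hxbar : ∀ j : Fin M, 0 < xbar j)
    (v : Fin M → ℝ) (hv : v = u - f xbar) (hvne : v ≠ 0) :
    ∑ j : Fin M, fderiv ℝ g xbar (Pi.single j 1) * v j < 0 := by
  set φ : ℝ → ℝ := fun s => Sk / St * exp (-(Ek - Et) * (1 / s - 1 / T0))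
  have hg_eq : g = fun y => 1 / 2 * ∑ j, (φ (y j) - u j) ^ 2 := by
    funext y
    simp only [hg, hf, φ]
  have hv_eq : v = fun j => u j - φ (xbar j) := by
    funext j
    simp only [hv, Pi.sub_apply, hf, φ]
  subst hg_eq hv_eq
  refine sum_fderiv_half_sum_sq_sub_mul_residual_neg
    (fun j => hasDerivAt_mul_exp_neg_mul_inv_sub _ _ T0 (hxbar j).ne') (fun j => ?_) hvne
  have := hxbar j
  have := sub_pos.mpr hE
  positivity

/-- Lemma 4.2: with `E_k > E_t`, for the least squares summand
`g(x) = (1/2) Σ_j (f(x)_j − u_j)²` and any componentwise positive `x̄`, the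
residual `v = u − f(x̄)`, if nonzero, is a descent direction for `g` at `x̄`:
`Σ_j (∂g(x̄)/∂x_j) v_j < 0`. -/
theorem residual_is_descent_direction (M : ℕ) (hM : 0 < M)
    (Sk St T0 : ℝ) (hSk : 0 < Sk) (hSt : 0 < St) (hT0 : 0 < T0)
    (Ek Et : ℝ) (hE : Ek > Et) (u : Fin M → ℝ)
    (f : (Fin M → ℝ) → (Fin M → ℝ))
    (hf : ∀ (x : Fin M → ℝ) (j : Fin M),
      f x j = (Sk / St) * Real.exp (-(Ek - Et) * (1 / x j - 1 / T0)))
    (g : (Fin M → ℝ) → ℝ)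
    (hg : ∀ x : Fin M → ℝ, g x = (1 / 2) * ∑ j : Fin M, (f x j - u j) ^ 2)
    (xbar : Fin M → ℝ) (hxbar : ∀ j : Fin M, 0 < xbar j)
    (v : Fin M → ℝ) (hv : v = u - f xbar) (hvne : v ≠ 0) :
    ∑ j : Fin M, fderiv ℝ g xbar (Pi.single j 1) * v j < 0 :=
  residual_is_descent_direction_general M Sk St T0 hSk hSt Ek Et hE u f hf g hg xbar hxbar v hv hvne
end
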